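/- Suppose there exists z0 ∈ ℂ with |z0| ≥ 1 such that rank P_d(z0) = rank P_i(z0). Then there exist x0 ∈ ℂ^n and d0 ∈ ℂ^o such that (A − z0 I) x0 + B_d d0 + B_{a,i} = 0 and C x0 + D_d d0 + D_{a,i} = 0. Consequently, the cardinality-one attack a(k) = z0^k e_i (e_i the i-th standard basis vector of ℂ^m) is persistent and undetectable, and the security index satisfies α_i = 1. -/

import Mathlib

open Filter

noncomputable section

/-- State trajectory of `x(k+1) = A x(k) + B_d d(k) + B_a a(k)` with `x(0) = x0`. -/
def traj {n o m : ℕ} (A : Matrix (Fin n) (Fin n) ℂ) (Bd : Matrix (Fin n) (Fin o) ℂ)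
    (Ba : Matrix (Fin n) (Fin m) ℂ) (a : ℕ → Fin m → ℂ) (d : ℕ → Fin o → ℂ)
    (x0 : Fin n → ℂ) : ℕ → Fin n → ℂ
  | 0 => x0
  | k + 1 => A.mulVec (traj A Bd Ba a d x0 k) + Bd.mulVec (d k) + Ba.mulVec (a k)

/-- Output `y(a,d,x0)(k) = C x(k) + D_d d(k) + D_a a(k)`. -/
def output {n o m p : ℕ} (A : Matrix (Fin n) (Fin n) ℂ) (Bd : Matrix (Fin n) (Fin o) ℂ)
    (Ba : Matrix (Fin n) (Fin m) ℂ) (C : Matrix (Fin p) (Fin n) ℂ)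
    (Dd : Matrix (Fin p) (Fin o) ℂ) (Da : Matrix (Fin p) (Fin m) ℂ)
    (a : ℕ → Fin m → ℂ) (d : ℕ → Fin o → ℂ) (x0 : Fin n → ℂ) (k : ℕ) : Fin p → ℂ :=
  C.mulVec (traj A Bd Ba a d x0 k) + Dd.mulVec (d k) + Da.mulVec (a k)

/-- `‖a‖₀`: the number of component signals of `a` that are not identically zero. -/
def sparsity {m : ℕ} (a : ℕ → Fin m → ℂ) : ℕ := {j : Fin m | ∃ k, a k j ≠ 0}.ncard

/-- A persistent attack does not converge to `0`. -/
def Persistent {m : ℕ} (a : ℕ → Fin m → ℂ) : Prop := ¬ Tendsto a atTop (nhds 0)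

/-- Undetectable: some disturbance and initial state give identically zero output. -/
def Undetectable {n o m p : ℕ} (A : Matrix (Fin n) (Fin n) ℂ) (Bd : Matrix (Fin n) (Fin o) ℂ)
    (Ba : Matrix (Fin n) (Fin m) ℂ) (C : Matrix (Fin p) (Fin n) ℂ)
    (Dd : Matrix (Fin p) (Fin o) ℂ) (Da : Matrix (Fin p) (Fin m) ℂ)
    (a : ℕ → Fin m → ℂ) : Prop :=
  ∃ d x0, ∀ k, output A Bd Ba C Dd Da a d x0 k = 0

/-- Security index `α_i`: minimal `‖a‖₀` over persistent undetectable attacks whose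
`i`-th component signal is not identically zero (`⊤` if none exists). -/
def secIndex {n o m p : ℕ} (A : Matrix (Fin n) (Fin n) ℂ) (Bd : Matrix (Fin n) (Fin o) ℂ)
    (Ba : Matrix (Fin n) (Fin m) ℂ) (C : Matrix (Fin p) (Fin n) ℂ)
    (Dd : Matrix (Fin p) (Fin o) ℂ) (Da : Matrix (Fin p) (Fin m) ℂ) (i : Fin m) : ℕ∞ :=
  sInf {c : ℕ∞ | ∃ a : ℕ → Fin m → ℂ, Persistent a ∧ Undetectable A Bd Ba C Dd Da a ∧
    (∃ k, a k i ≠ 0) ∧ c = (sparsity a : ℕ∞)}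

/-- The disturbance pencil `P_d(z) = [[A - zI, B_d], [C, D_d]]`. -/
def Pdz {n o p : ℕ} (A : Matrix (Fin n) (Fin n) ℂ) (Bd : Matrix (Fin n) (Fin o) ℂ)
    (C : Matrix (Fin p) (Fin n) ℂ) (Dd : Matrix (Fin p) (Fin o) ℂ) (z : ℂ) :
    Matrix (Fin n ⊕ Fin p) (Fin n ⊕ Fin o) ℂ :=
  Matrix.fromBlocks (A - z • (1 : Matrix (Fin n) (Fin n) ℂ)) Bd C Dd

/-- The pencil `P_i(z)`: `P_d(z)` with the column `[B_{a,i}; D_{a,i}]` appended. -/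
def Piz {n o m p : ℕ} (A : Matrix (Fin n) (Fin n) ℂ) (Bd : Matrix (Fin n) (Fin o) ℂ)
    (Ba : Matrix (Fin n) (Fin m) ℂ) (C : Matrix (Fin p) (Fin n) ℂ)
    (Dd : Matrix (Fin p) (Fin o) ℂ) (Da : Matrix (Fin p) (Fin m) ℂ) (i : Fin m) (z : ℂ) :
    Matrix (Fin n ⊕ Fin p) ((Fin n ⊕ Fin o) ⊕ Unit) ℂ :=
  Matrix.of fun r c =>
    Sum.elim (fun c' => Pdz A Bd C Dd z r c')
      (fun _ => Sum.elim (fun rn => Ba rn i) (fun rp => Da rp i) r) c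

variable {n o m p : ℕ} (A : Matrix (Fin n) (Fin n) ℂ) (Bd : Matrix (Fin n) (Fin o) ℂ)
  (Ba : Matrix (Fin n) (Fin m) ℂ) (C : Matrix (Fin p) (Fin n) ℂ)
  (Dd : Matrix (Fin p) (Fin o) ℂ) (Da : Matrix (Fin p) (Fin m) ℂ)

/-! Equal ranks force the column `[B_{a,i}; D_{a,i}]` into the column space of `P_d(z0)`,
which yields the masking pair `(x0, d0)`. The attack `z0^k e_i` is then masked by the state
`z0^k x0` and the disturbance `z0^k d0`, so its output vanishes, and `|z0| ≥ 1` keeps it from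
decaying. Every admissible attack has a nonzero component, so `α_i ≥ 1`. -/

open Matrix

theorem Matrix.exists_mulVec_eq_of_rank_fromCols_eq {K ι κ : Type*} [Field K] [Fintype ι]
    [Fintype κ] (M : Matrix ι κ K) (b : ι → K)
    (h : M.rank = (fromCols M (replicateCol Unit b)).rank) : ∃ v, M *ᵥ v = b := by
  set N := fromCols M (replicateCol Unit b)
  have hle : LinearMap.range M.mulVecLin ≤ LinearMap.range N.mulVecLin := by
    rintro _ ⟨v, rfl⟩
    exact ⟨Sum.elim v 0, by simp [N]⟩
  have hb : b ∈ LinearMap.range N.mulVecLin :=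
    ⟨Sum.elim 0 1, by ext; simp [N, replicateCol, mulVec, dotProduct]⟩
  rwa [← Submodule.eq_of_le_of_finrank_eq hle h] at hb

theorem exists_masking_pair_of_rank_eq (i : Fin m) (z : ℂ)
    (hrank : (Pdz A Bd C Dd z).rank = (Piz A Bd Ba C Dd Da i z).rank) :
    ∃ (x0 : Fin n → ℂ) (d0 : Fin o → ℂ),
      (A - z • 1) *ᵥ x0 + Bd *ᵥ d0 + Ba.col i = 0 ∧
      C *ᵥ x0 + Dd *ᵥ d0 + Da.col i = 0 := by
  obtain ⟨v, hv⟩ := (Pdz A Bd C Dd z).exists_mulVec_eq_of_rank_fromCols_eq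
    (Sum.elim (Ba.col i) (Da.col i)) hrank -- `Piz` unfolds to this `fromCols`
  rw [Pdz, fromBlocks_mulVec, Sum.elim_eq_iff] at hv
  refine ⟨-(v ∘ Sum.inl), -(v ∘ Sum.inr), ?_, ?_⟩
  · rw [mulVec_neg, mulVec_neg, ← hv.1]; abel
  · rw [mulVec_neg, mulVec_neg, ← hv.2]; abel

section Geometric

variable {z : ℂ} {x0 : Fin n → ℂ} {d0 : Fin o → ℂ} {u : Fin m → ℂ}

theorem traj_pow_smul (hx : (A - z • 1) *ᵥ x0 + Bd *ᵥ d0 + Ba *ᵥ u = 0) (k : ℕ) :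
    traj A Bd Ba (fun k => z ^ k • u) (fun k => z ^ k • d0) x0 k = z ^ k • x0 := by
  have hstep : A *ᵥ x0 + Bd *ᵥ d0 + Ba *ᵥ u = z • x0 := by
    rw [sub_mulVec, smul_mulVec, one_mulVec] at hx
    rw [← sub_eq_zero, ← hx]; abel
  induction k with
  | zero => simp [traj]
  | succ k ih =>
    rw [traj, ih, mulVec_smul, mulVec_smul, mulVec_smul, ← smul_add, ← smul_add, hstep,
      smul_smul, pow_succ]

theorem undetectable_pow_smul (hx : (A - z • 1) *ᵥ x0 + Bd *ᵥ d0 + Ba *ᵥ u = 0)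
    (hy : C *ᵥ x0 + Dd *ᵥ d0 + Da *ᵥ u = 0) :
    Undetectable A Bd Ba C Dd Da fun k => z ^ k • u := by
  refine ⟨fun k => z ^ k • d0, x0, fun k => ?_⟩
  rw [output, traj_pow_smul A Bd Ba hx, mulVec_smul, mulVec_smul, mulVec_smul, ← smul_add,
    ← smul_add, hy, smul_zero]

theorem persistent_pow_smul (hz : 1 ≤ ‖z‖) (hu : u ≠ 0) :
    Persistent fun k : ℕ => z ^ k • u := by
  intro h
  have hle : ∀ k : ℕ, ‖u‖ ≤ ‖z ^ k • u‖ := fun k => by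
    rw [norm_smul, norm_pow]
    exact le_mul_of_one_le_left (norm_nonneg _) (one_le_pow₀ hz)
  exact (norm_pos_iff.2 hu).not_ge (ge_of_tendsto' (by simpa using h.norm) hle)

theorem sparsity_pow_smul_single (z : ℂ) (i : Fin m) :
    sparsity (fun k : ℕ => z ^ k • (Pi.single i 1 : Fin m → ℂ)) = 1 := by
  have hsupp : {j | ∃ k : ℕ, (z ^ k • (Pi.single i 1 : Fin m → ℂ)) j ≠ 0} = {i} := by
    ext j
    constructor
    · rintro ⟨k, hk⟩
      by_contra hji
      simp [Pi.single_eq_of_ne hji] at hk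
    · rintro rfl
      exact ⟨0, by simp⟩
  rw [sparsity, hsupp, Set.ncard_singleton]

end Geometric

theorem one_le_secIndex (i : Fin m) : 1 ≤ secIndex A Bd Ba C Dd Da i := by
  refine le_sInf ?_
  rintro _ ⟨a, -, -, ⟨k, hk⟩, rfl⟩
  have hpos : 0 < sparsity a := (Set.ncard_pos (Set.toFinite _)).2 ⟨i, k, hk⟩
  exact_mod_cast hpos

theorem secIndex_le_sparsity {i : Fin m} {a : ℕ → Fin m → ℂ} (hpers : Persistent a)
    (hund : Undetectable A Bd Ba C Dd Da a) (hi : ∃ k, a k i ≠ 0) :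
    secIndex A Bd Ba C Dd Da i ≤ sparsity a := by
  unfold secIndex
  exact sInf_le ⟨a, hpers, hund, hi, rfl⟩

theorem secIndex_eq_one_of_rank_eq (i : Fin m) (z0 : ℂ) (hz0 : 1 ≤ ‖z0‖)
    (hrank : (Pdz A Bd C Dd z0).rank = (Piz A Bd Ba C Dd Da i z0).rank) :
    (∃ (x0 : Fin n → ℂ) (d0 : Fin o → ℂ),
      (A - z0 • (1 : Matrix (Fin n) (Fin n) ℂ)).mulVec x0 + Bd.mulVec d0 +
        (fun r => Ba r i) = 0 ∧
      C.mulVec x0 + Dd.mulVec d0 + (fun r => Da r i) = 0) ∧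
    Persistent (fun k : ℕ => z0 ^ k • (Pi.single i 1 : Fin m → ℂ)) ∧
    Undetectable A Bd Ba C Dd Da (fun k : ℕ => z0 ^ k • (Pi.single i 1 : Fin m → ℂ)) ∧
    secIndex A Bd Ba C Dd Da i = 1 := by
  obtain ⟨x0, d0, hx, hy⟩ := exists_masking_pair_of_rank_eq A Bd Ba C Dd Da i z0 hrank
  set e : Fin m → ℂ := Pi.single i 1
  have hpers : Persistent fun k : ℕ => z0 ^ k • e := persistent_pow_smul hz0 (by simp [e])
  have hund : Undetectable A Bd Ba C Dd Da fun k : ℕ => z0 ^ k • e :=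
    undetectable_pow_smul A Bd Ba C Dd Da (by rwa [mulVec_single_one Ba i])
      (by rwa [mulVec_single_one Da i])
  refine ⟨⟨x0, d0, hx, hy⟩, hpers, hund, le_antisymm ?_ (one_le_secIndex A Bd Ba C Dd Da i)⟩
  simpa [e, sparsity_pow_smul_single] using
    secIndex_le_sparsity A Bd Ba C Dd Da hpers hund ⟨0, by simp [e]⟩
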